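/- Let P, Q be affine points of E(ℚ) with X^{1/6} ≤ x(P) < x(Q), and suppose x(P) = x₁/s and x(Q) = x₂/s where x₁, x₂ are integers and s is a positive integer. Then P + Q is an affine point and h(P+Q) ≤ h(P) + 2·h(Q) + 3·log s + 2.9. -/

import Mathlib

open scoped TensorProduct

noncomputable section

/-- The logarithmic Weil height of a rational number:
`h(p/q) = log max (|p|, q)` for `p/q` in lowest terms. -/
def qh (q : ℚ) : ℝ := Real.log (max (|q.num| : ℝ) (q.den : ℝ))

/-- The short Weierstrass curve `y² = x³ + Ax + B` over `ℚ`. -/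
def Ecurve (A B : ℤ) : WeierstrassCurve.Affine ℚ :=
  { a₁ := 0, a₂ := 0, a₃ := 0, a₄ := (A : ℚ), a₆ := (B : ℚ) }

/-- `X = max (|A|³, |B|²)` as a real number. -/
def Xval (A B : ℤ) : ℝ := max (|(A : ℝ)| ^ 3) (|(B : ℝ)| ^ 2)

/-- The x-coordinate of an affine point (with junk value `0` at the point at infinity). -/
def xCoord {W : WeierstrassCurve.Affine ℚ} : W.Point → ℚ
  | .zero => 0
  | @WeierstrassCurve.Affine.Point.some _ _ _ x _ _ => x

/-- `hh : W.Point → ℝ` is a canonical height for `W`: it vanishes on points of finite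
order, and for every point `P` of infinite order, `h(x(2ⁿ P)) / 4ⁿ → hh P`. -/
def IsCanonicalHeight (W : WeierstrassCurve.Affine ℚ) (hh : W.Point → ℝ) : Prop :=
  (∀ P : W.Point, IsOfFinAddOrder P → hh P = 0) ∧
  (∀ P : W.Point, ¬ IsOfFinAddOrder P →
    Filter.Tendsto (fun n : ℕ => qh (xCoord ((2 ^ n : ℕ) • P)) / 4 ^ n)
      Filter.atTop (nhds (hh P)))

/-- `cos θ_{P,Q} = (ĥ(P+Q) − ĥ(P) − ĥ(Q)) / (2 √(ĥ(P) ĥ(Q)))`. -/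
def cosAngle {W : WeierstrassCurve.Affine ℚ} (hh : W.Point → ℝ) (P Q : W.Point) : ℝ :=
  (hh (P + Q) - hh P - hh Q) / (2 * Real.sqrt (hh P * hh Q))

/-- The rank `dim_ℚ (ℚ ⊗_ℤ G)` of an abelian group `G`. -/
def rankQ (G : Type*) [AddCommGroup G] : ℕ :=
  Module.finrank ℚ (ℚ ⊗[ℤ] G)

end

/-!
Write `u = x₁/s < v = x₂/s` for the two x-coordinates. The hypothesis `X^{1/6} ≤ u` gives
`|A| ≤ u²`, `|B| ≤ u³` and `u ≥ 1`. The chord through `P` and `Q` gives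
`x(P+Q) = (uv(u+v) + A(u+v) + 2B - 2y₁y₂) / (u-v)²`. Multiplying numerator and denominator by
`s³` makes both integers: `s³y₁y₂` is rational and its square `(s³y₁²)(s³y₂²)` is an integer.
Since `|y₁y₂| ≤ 3uv²`, each of the two integers is at most `12 s³ u v² = 12 x₁ x₂²` in absolute
value, so `h(P+Q) ≤ log 12 + 3 log s + log u + 2 log v`, and `log u ≤ h(P)`, `log v ≤ h(Q)`,
`log 12 < 2.9`.
-/

theorem log_le_qh (q : ℚ) : Real.log q ≤ qh q := by
  rcases eq_or_ne q 0 with rfl | hq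
  · simp [qh]
  rw [← Real.log_abs, qh]
  refine Real.log_le_log (by positivity) (le_max_of_le_left ?_)
  rw [Rat.cast_def, abs_div, Nat.abs_cast]
  exact div_le_self (abs_nonneg _) (Nat.one_le_cast.mpr q.pos)

theorem qh_le_log_of_eq_div {q : ℚ} {N D : ℤ} (hD : D ≠ 0) (hq : q = N / D) {c : ℝ}
    (hN : |(N : ℝ)| ≤ c) (hDc : |(D : ℝ)| ≤ c) : qh q ≤ Real.log c := by
  rw [← Rat.divInt_eq_div] at hq
  have hnum : |q.num| ≤ |N| := by
    rcases eq_or_ne N 0 with rfl | hN0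
    · simp [hq]
    · exact Int.le_of_dvd (abs_pos.mpr hN0) ((abs_dvd_abs _ _).mpr (hq ▸ Rat.num_dvd N hD))
  have hden : (q.den : ℤ) ≤ |D| :=
    Int.le_of_dvd (abs_pos.mpr hD) ((dvd_abs _ _).mpr (hq ▸ Rat.den_dvd N D))
  refine Real.log_le_log (lt_max_of_lt_right (by exact_mod_cast q.pos)) (max_le ?_ ?_)
  · exact le_trans (by exact_mod_cast hnum) hN
  · exact le_trans (by exact_mod_cast hden) hDc

theorem exists_intCast_eq_of_sq_eq_intCast {q : ℚ} {n : ℤ} (h : q ^ 2 = n) :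
    ∃ m : ℤ, (m : ℚ) = q := by
  have hden : q.den = 1 := by simpa [Rat.den_pow] using congrArg Rat.den h
  exact ⟨q.num, (Rat.den_eq_one_iff q).mp hden⟩

theorem log_twelve_le : Real.log 12 ≤ 2.9 := by
  rw [Real.log_le_iff_le_exp (by norm_num), show (2.9 : ℝ) = 1 + 1 + 0.9 by norm_num,
    Real.exp_add, Real.exp_add]
  nlinarith [Real.exp_one_gt_d9, Real.add_one_le_exp (0.9 : ℝ), Real.exp_pos 1]

theorem one_le_Xval {A B : ℤ} (hAB : 4 * A ^ 3 + 27 * B ^ 2 ≠ 0) : 1 ≤ Xval A B := by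
  by_cases hA : A = 0
  · have hB : B ≠ 0 := by rintro rfl; simp [hA] at hAB
    exact le_max_of_le_right (one_le_pow₀ (by exact_mod_cast Int.one_le_abs hB))
  · exact le_max_of_le_left (one_le_pow₀ (by exact_mod_cast Int.one_le_abs hA))

theorem abs_le_sq_and_abs_le_cube_of_Xval_rpow_le {A B : ℤ} {t : ℝ}
    (ht : Xval A B ^ ((1 : ℝ) / 6) ≤ t) : |(A : ℝ)| ≤ t ^ 2 ∧ |(B : ℝ)| ≤ t ^ 3 := by
  have hX : 0 ≤ Xval A B := le_max_of_le_left (by positivity)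
  have ht0 : 0 ≤ t := (Real.rpow_nonneg hX _).trans ht
  have hX6 : Xval A B ≤ t ^ 6 := by
    calc Xval A B = (Xval A B ^ ((6 : ℕ)⁻¹ : ℝ)) ^ 6 :=
          (Real.rpow_inv_natCast_pow hX (by norm_num)).symm
      _ ≤ t ^ 6 := pow_le_pow_left₀ (Real.rpow_nonneg hX _) (by simpa using ht) 6
  constructor
  · refine (pow_le_pow_iff_left₀ (abs_nonneg _) (by positivity) three_ne_zero).mp ?_
    calc |(A : ℝ)| ^ 3 ≤ Xval A B := le_max_left _ _
      _ ≤ (t ^ 2) ^ 3 := by rw [← pow_mul]; exact hX6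
  · refine (pow_le_pow_iff_left₀ (abs_nonneg _) (by positivity) two_ne_zero).mp ?_
    calc |(B : ℝ)| ^ 2 ≤ Xval A B := le_max_right _ _
      _ ≤ (t ^ 3) ^ 2 := by rw [← pow_mul]; exact hX6

theorem abs_cube_add_mul_add_le {K : Type*} [Field K] [LinearOrder K] [IsStrictOrderedRing K]
    {a b u x : K} (hu : 0 ≤ u) (hux : u ≤ x) (ha : |a| ≤ u ^ 2) (hb : |b| ≤ u ^ 3) :
    |x ^ 3 + a * x + b| ≤ 3 * x ^ 3 := by
  have hx : 0 ≤ x := hu.trans hux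
  have hu2 : u ^ 2 ≤ x ^ 2 := pow_le_pow_left₀ hu hux 2
  have hu3 : u ^ 3 ≤ x ^ 3 := pow_le_pow_left₀ hu hux 3
  calc |x ^ 3 + a * x + b| ≤ |x ^ 3| + |a| * |x| + |b| := by
        grw [abs_add_le, abs_add_le, abs_mul]
    _ ≤ x ^ 3 + x ^ 2 * x + x ^ 3 := by
        rw [abs_of_nonneg hx, abs_of_nonneg (by positivity)]
        gcongr <;> linarith
    _ = 3 * x ^ 3 := by ring

theorem abs_addX_num_le {K : Type*} [Field K] [LinearOrder K] [IsStrictOrderedRing K]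
    {a b u v w : K} (hu : 0 ≤ u) (huv : u ≤ v) (ha : |a| ≤ u ^ 2) (hb : |b| ≤ u ^ 3)
    (hw : w ^ 2 = (u ^ 3 + a * u + b) * (v ^ 3 + a * v + b)) :
    |u * v * (u + v) + a * (u + v) + 2 * b - 2 * w| ≤ 12 * u * v ^ 2 := by
  have hv : 0 ≤ v := hu.trans huv
  have hfu := abs_cube_add_mul_add_le hu le_rfl ha hb
  have hfv := abs_cube_add_mul_add_le hu huv ha hb
  have hw' : |w| ≤ 3 * u * v ^ 2 := by
    refine abs_le_of_sq_le_sq ?_ (by positivity)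
    calc w ^ 2 = |u ^ 3 + a * u + b| * |v ^ 3 + a * v + b| := by
          rw [← abs_mul, ← hw, abs_of_nonneg (sq_nonneg w)]
      _ ≤ (3 * u ^ 3) * (3 * v ^ 3) := by gcongr
      _ ≤ (3 * u * v ^ 2) ^ 2 := by
          have : u ^ 3 * v ^ 3 ≤ u ^ 2 * v ^ 4 := by
            calc u ^ 3 * v ^ 3 = (u ^ 2 * v ^ 3) * u := by ring
              _ ≤ (u ^ 2 * v ^ 3) * v := by gcongr
              _ = u ^ 2 * v ^ 4 := by ring
          nlinarith
  have huv2 : u * v * (u + v) ≤ 2 * u * v ^ 2 := by nlinarith [mul_nonneg hu hv]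
  have hau : |a * (u + v)| ≤ 2 * u * v ^ 2 := by
    rw [abs_mul, abs_of_nonneg (by positivity : 0 ≤ u + v)]
    calc |a| * (u + v) ≤ u ^ 2 * (2 * v) := by gcongr; linarith
      _ ≤ 2 * u * v ^ 2 := by nlinarith [mul_nonneg hu hv]
  have hbu : |b| ≤ u * v ^ 2 := hb.trans (by nlinarith [mul_nonneg hu hv, mul_nonneg hu hu])
  obtain ⟨hau₁, hau₂⟩ := abs_le.mp hau
  obtain ⟨hbu₁, hbu₂⟩ := abs_le.mp hbu
  obtain ⟨hw₁, hw₂⟩ := abs_le.mp hw'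
  have huv0 : 0 ≤ u * v * (u + v) := by positivity
  exact abs_le.mpr ⟨by linarith, by linarith⟩

namespace Ecurve

open WeierstrassCurve.Affine

variable {A B : ℤ}

theorem sq_eq_of_nonsingular {x y : ℚ} (h : (Ecurve A B).Nonsingular x y) :
    y ^ 2 = x ^ 3 + A * x + B := by
  have := ((Ecurve A B).equation_iff x y).mp h.1
  simp only [Ecurve] at this
  linear_combination this

theorem xCoord_add_of_X_ne {x₁ x₂ y₁ y₂ : ℚ} {h₁ : (Ecurve A B).Nonsingular x₁ y₁}
    {h₂ : (Ecurve A B).Nonsingular x₂ y₂} (hx : x₁ ≠ x₂) :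
    xCoord (Point.some _ _ h₁ + Point.some _ _ h₂) =
      (x₁ * x₂ * (x₁ + x₂) + A * (x₁ + x₂) + 2 * B - 2 * (y₁ * y₂)) / (x₁ - x₂) ^ 2 := by
  have hx' : x₁ - x₂ ≠ 0 := sub_ne_zero.mpr hx
  rw [Point.add_of_X_ne hx]
  simp only [xCoord, addX, slope_of_X_ne hx, Ecurve]
  field_simp
  linear_combination sq_eq_of_nonsingular h₁ + sq_eq_of_nonsingular h₂

theorem exists_intCast_eq_cube_mul_addX_num {u v y₁ y₂ : ℚ} {x₁ x₂ s : ℤ} (hs : s ≠ 0)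
    (h₁ : y₁ ^ 2 = u ^ 3 + A * u + B) (h₂ : y₂ ^ 2 = v ^ 3 + A * v + B)
    (hu : u = x₁ / s) (hv : v = x₂ / s) :
    ∃ N : ℤ, (N : ℚ) = s ^ 3 * (u * v * (u + v) + A * (u + v) + 2 * B - 2 * (y₁ * y₂)) := by
  have hsQ : (s : ℚ) ≠ 0 := by exact_mod_cast hs
  subst hu hv
  have hf₁ : (s : ℚ) ^ 3 * y₁ ^ 2 = ((x₁ ^ 3 + A * x₁ * s ^ 2 + B * s ^ 3 : ℤ) : ℚ) := by
    rw [h₁]; push_cast; field_simp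
  have hf₂ : (s : ℚ) ^ 3 * y₂ ^ 2 = ((x₂ ^ 3 + A * x₂ * s ^ 2 + B * s ^ 3 : ℤ) : ℚ) := by
    rw [h₂]; push_cast; field_simp
  obtain ⟨m, hm⟩ : ∃ m : ℤ, (m : ℚ) = s ^ 3 * (y₁ * y₂) := by
    refine exists_intCast_eq_of_sq_eq_intCast (n := (x₁ ^ 3 + A * x₁ * s ^ 2 + B * s ^ 3) *
      (x₂ ^ 3 + A * x₂ * s ^ 2 + B * s ^ 3)) ?_
    rw [Int.cast_mul, ← hf₁, ← hf₂]
    ring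
  refine ⟨x₁ * x₂ * (x₁ + x₂) + A * s ^ 2 * (x₁ + x₂) + 2 * B * s ^ 3 - 2 * m, ?_⟩
  push_cast
  rw [hm]
  field_simp

theorem qh_xCoord_add_le {u v y₁ y₂ : ℚ} (h₁ : (Ecurve A B).Nonsingular u y₁)
    (h₂ : (Ecurve A B).Nonsingular v y₂) (hu : 1 ≤ u) (huv : u < v)
    (hA : |(A : ℚ)| ≤ u ^ 2) (hB : |(B : ℚ)| ≤ u ^ 3) {x₁ x₂ s : ℤ} (hs : 0 < s)
    (hx₁ : u = x₁ / s) (hx₂ : v = x₂ / s) :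
    qh (xCoord (Point.some _ _ h₁ + Point.some _ _ h₂)) ≤
      qh u + 2 * qh v + 3 * Real.log s + Real.log 12 := by
  have hsQ : (0 : ℚ) < s := by exact_mod_cast hs
  have hv : 0 < v := by linarith
  obtain ⟨N, hN⟩ := exists_intCast_eq_cube_mul_addX_num hs.ne' (sq_eq_of_nonsingular h₁)
    (sq_eq_of_nonsingular h₂) hx₁ hx₂
  set n := u * v * (u + v) + A * (u + v) + 2 * B - 2 * (y₁ * y₂)
  set D : ℤ := s * (x₁ - x₂) ^ 2
  have hD : (D : ℚ) = s ^ 3 * (u - v) ^ 2 := by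
    rw [hx₁, hx₂]; push_cast [D]; field_simp
  have hD0 : D ≠ 0 := by
    have : (D : ℚ) ≠ 0 := by rw [hD]; have := sub_ne_zero.mpr huv.ne; positivity
    exact_mod_cast this
  have hq : n / (u - v) ^ 2 = N / D := by
    rw [hN, hD, mul_div_mul_left _ _ (by positivity)]
  have hNc : |(N : ℚ)| ≤ 12 * s ^ 3 * u * v ^ 2 := by
    rw [hN, abs_mul, abs_of_pos (by positivity)]
    have := abs_addX_num_le (w := y₁ * y₂) (by linarith) huv.le hA hB (by
      rw [mul_pow, sq_eq_of_nonsingular h₁, sq_eq_of_nonsingular h₂])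
    calc _ ≤ (s : ℚ) ^ 3 * (12 * u * v ^ 2) := by gcongr
      _ = _ := by ring
  have hDc : |(D : ℚ)| ≤ 12 * s ^ 3 * u * v ^ 2 := by
    rw [hD, abs_of_nonneg (by positivity)]
    have : (u - v) ^ 2 ≤ 12 * u * v ^ 2 := by nlinarith
    calc _ ≤ (s : ℚ) ^ 3 * (12 * u * v ^ 2) := by gcongr
      _ = _ := by ring
  rw [xCoord_add_of_X_ne huv.ne]
  calc qh (n / (u - v) ^ 2) ≤ Real.log ((12 * s ^ 3 * u * v ^ 2 : ℚ) : ℝ) :=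
        qh_le_log_of_eq_div hD0 hq (by exact_mod_cast hNc) (by exact_mod_cast hDc)
    _ = Real.log 12 + 3 * Real.log s + Real.log u + 2 * Real.log v := by
        push_cast
        rw [Real.log_mul, Real.log_mul, Real.log_mul, Real.log_pow, Real.log_pow]
        · push_cast; ring
        all_goals positivity
    _ ≤ qh u + 2 * qh v + 3 * Real.log s + Real.log 12 := by
        linarith [log_le_qh u, log_le_qh v]

end Ecurve

theorem statement4_general (A B : ℤ) (hAB : 4 * A ^ 3 + 27 * B ^ 2 ≠ 0)
    (P Q : (Ecurve A B).Point)
    (hXP : Xval A B ^ ((1 : ℝ) / 6) ≤ ((xCoord P : ℚ) : ℝ))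
    (hPQ : xCoord P < xCoord Q)
    (x₁ x₂ s : ℤ) (hs : 0 < s)
    (hx₁ : xCoord P = (x₁ : ℚ) / (s : ℚ)) (hx₂ : xCoord Q = (x₂ : ℚ) / (s : ℚ)) :
    P + Q ≠ 0 ∧
    qh (xCoord (P + Q)) ≤ qh (xCoord P) + 2 * qh (xCoord Q) + 3 * Real.log s + 2.9 := by
  have hu : 1 ≤ xCoord P := by
    have := (Real.one_le_rpow (one_le_Xval hAB) (by norm_num : (0 : ℝ) ≤ 1 / 6)).trans hXP
    exact_mod_cast this
  obtain ⟨hA, hB⟩ := abs_le_sq_and_abs_le_cube_of_Xval_rpow_le hXP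
  rcases P with _ | ⟨u, y₁, h₁⟩
  · simp only [xCoord] at hu; norm_num at hu
  rcases Q with _ | ⟨v, y₂, h₂⟩
  · simp only [xCoord] at hu hPQ; linarith
  simp only [xCoord] at hu hPQ hA hB hx₁ hx₂
  refine ⟨?_, ?_⟩
  · rw [WeierstrassCurve.Affine.Point.add_of_X_ne hPQ.ne]
    exact WeierstrassCurve.Affine.Point.some_ne_zero _
  · have := Ecurve.qh_xCoord_add_le h₁ h₂ hu hPQ (by exact_mod_cast hA) (by exact_mod_cast hB)
      hs hx₁ hx₂
    show _ ≤ qh u + 2 * qh v + _ + _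
    linarith [log_twelve_le]

theorem statement4 (A B : ℤ) (hAB : 4 * A ^ 3 + 27 * B ^ 2 ≠ 0)
    (P Q : (Ecurve A B).Point) (hP : P ≠ 0) (hQ : Q ≠ 0)
    (hXP : Xval A B ^ ((1 : ℝ) / 6) ≤ ((xCoord P : ℚ) : ℝ))
    (hPQ : xCoord P < xCoord Q)
    (x₁ x₂ s : ℤ) (hs : 0 < s)
    (hx₁ : xCoord P = (x₁ : ℚ) / (s : ℚ)) (hx₂ : xCoord Q = (x₂ : ℚ) / (s : ℚ)) :
    P + Q ≠ 0 ∧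
    qh (xCoord (P + Q)) ≤ qh (xCoord P) + 2 * qh (xCoord Q) + 3 * Real.log s + 2.9 :=
  statement4_general A B hAB P Q hXP hPQ x₁ x₂ s hs hx₁ hx₂
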